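/- arXiv:2602.11366 — 2 statements merged into one kernel-verified Lean document; each statement's English description precedes it below -/
import Mathlib

section
/- For T ≥ 1, m_* = 1/4, m_• = 1, and w_• = (2T+m_*+m_•)^5, the quantity K²·w_•·m_•²/((T+m_*+m_•)²·(T±K+m_*+m_•)·(T±K+m_*)) is strictly greater than 2T for all 1 ≤ K ≤ T, and 2T > Σ_{i=1}^{2T−(T±K)} 1/(T±K+m_*+m_•+i). -/
/-!
With `a = 2T + 5/4`, every factor of the denominator is at most `a`, so the denominator is at
most `a ^ 4` while the numerator is at least `a ^ 5`; the ratio is therefore at least `a > 2T`.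
The sum has at most `2T` terms, each at most `1/2`.
-/

open Finset

lemma sum_Icc_one_div_add_le (n : ℕ) {c : ℝ} (hc : 0 ≤ c) :
    ∑ i ∈ Icc 1 n, 1 / (c + (i : ℝ)) ≤ n / (c + 1) := by
  calc ∑ i ∈ Icc 1 n, 1 / (c + (i : ℝ))
      ≤ ∑ _i ∈ Icc 1 n, 1 / (c + 1) := by
        refine sum_le_sum fun i hi => ?_
        have hi : (1 : ℝ) ≤ i := by exact_mod_cast (mem_Icc.mp hi).1
        gcongr
    _ = n / (c + 1) := by simp [div_eq_mul_inv]

lemma sum_Icc_one_div_add_lt_two_mul {T n : ℕ} {c : ℝ} (hT : 1 ≤ T) (hn : n ≤ 2 * T)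
    (hc : 1 ≤ c) : ∑ i ∈ Icc 1 n, 1 / (c + (i : ℝ)) < 2 * T := by
  have hT : (1 : ℝ) ≤ T := by exact_mod_cast hT
  have hn : (n : ℝ) ≤ 2 * T := by exact_mod_cast hn
  calc ∑ i ∈ Icc 1 n, 1 / (c + (i : ℝ))
      ≤ n / (c + 1) := sum_Icc_one_div_add_le n (by linarith)
    _ ≤ n / 2 := by gcongr; linarith
    _ < 2 * T := by linarith

lemma two_mul_lt_weighted_ratio {t k d₁ d₂ : ℝ} (ht : 0 ≤ t) (hk : 1 ≤ k)
    (hd₁ : 0 < d₁) (hd₂ : 0 < d₂) (h₁ : d₁ ≤ 2 * t + 5 / 4) (h₂ : d₂ ≤ 2 * t + 5 / 4) :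
    2 * t < k ^ 2 * (2 * t + 1 / 4 + 1) ^ 5 * 1 ^ 2 / ((t + 1 / 4 + 1) ^ 2 * d₁ * d₂) := by
  set a := 2 * t + 5 / 4 with ha_def
  have ha : 0 < a := by positivity
  have hD : 0 < (t + 1 / 4 + 1) ^ 2 * d₁ * d₂ := by positivity
  have hDa : (t + 1 / 4 + 1) ^ 2 * d₁ * d₂ ≤ a ^ 4 := by
    calc (t + 1 / 4 + 1) ^ 2 * d₁ * d₂ ≤ a ^ 2 * a * a := by
          gcongr
          linarith [ha_def]
      _ = a ^ 4 := by ring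
  calc 2 * t < a := by linarith [ha_def]
    _ = a ^ 5 / a ^ 4 := by field_simp
    _ ≤ a ^ 5 / ((t + 1 / 4 + 1) ^ 2 * d₁ * d₂) := by gcongr
    _ ≤ k ^ 2 * a ^ 5 / ((t + 1 / 4 + 1) ^ 2 * d₁ * d₂) := by
        gcongr
        exact le_mul_of_one_le_left (by positivity) (one_le_pow₀ hk)
    _ = k ^ 2 * (2 * t + 1 / 4 + 1) ^ 5 * 1 ^ 2 / ((t + 1 / 4 + 1) ^ 2 * d₁ * d₂) := by
        rw [ha_def]; ring

theorem final_estimate_general (T : ℕ) :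
    let ms : ℝ := 1 / 4
    let mb : ℝ := 1
    let wb : ℝ := (2 * (T : ℝ) + ms + mb) ^ 5
    ∀ K : ℕ, 1 ≤ K → K ≤ T →
      ((K : ℝ) ^ 2 * wb * mb ^ 2
          / (((T : ℝ) + ms + mb) ^ 2 * ((T : ℝ) + (K : ℝ) + ms + mb) * ((T : ℝ) + (K : ℝ) + ms))
        > 2 * (T : ℝ)) ∧
      ((K : ℝ) ^ 2 * wb * mb ^ 2
          / (((T : ℝ) + ms + mb) ^ 2 * ((T : ℝ) - (K : ℝ) + ms + mb) * ((T : ℝ) - (K : ℝ) + ms))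
        > 2 * (T : ℝ)) ∧
      (2 * (T : ℝ) > ∑ i ∈ Finset.Icc 1 (2 * T - (T + K)),
          1 / ((T : ℝ) + (K : ℝ) + ms + mb + (i : ℝ))) ∧
      (2 * (T : ℝ) > ∑ i ∈ Finset.Icc 1 (2 * T - (T - K)),
          1 / ((T : ℝ) - (K : ℝ) + ms + mb + (i : ℝ))) := by
  intro ms mb wb K hK hKT
  simp only [ms, mb, wb]
  have hk : (1 : ℝ) ≤ K := by exact_mod_cast hK
  have hkt : (K : ℝ) ≤ T := by exact_mod_cast hKT
  refine ⟨?_, ?_, ?_, ?_⟩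
  · exact two_mul_lt_weighted_ratio (by linarith) hk (by linarith) (by linarith)
      (by linarith) (by linarith)
  · exact two_mul_lt_weighted_ratio (by linarith) hk (by linarith) (by linarith)
      (by linarith) (by linarith)
  · exact sum_Icc_one_div_add_lt_two_mul (hK.trans hKT) (Nat.sub_le _ _) (by linarith)
  · exact sum_Icc_one_div_add_lt_two_mul (hK.trans hKT) (Nat.sub_le _ _) (by linarith)

/-- The final estimate in the separation lemma: the positive quantity from the
fraction identity exceeds `2T`, which in turn exceeds the harmonic-type sum
`H_{T ± K}`, for both sign choices. -/
theorem final_estimate (T : ℕ) (hT : 1 ≤ T) :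
    let ms : ℝ := 1 / 4
    let mb : ℝ := 1
    let wb : ℝ := (2 * (T : ℝ) + ms + mb) ^ 5
    ∀ K : ℕ, 1 ≤ K → K ≤ T →
      ((K : ℝ) ^ 2 * wb * mb ^ 2
          / (((T : ℝ) + ms + mb) ^ 2 * ((T : ℝ) + (K : ℝ) + ms + mb) * ((T : ℝ) + (K : ℝ) + ms))
        > 2 * (T : ℝ)) ∧
      ((K : ℝ) ^ 2 * wb * mb ^ 2
          / (((T : ℝ) + ms + mb) ^ 2 * ((T : ℝ) - (K : ℝ) + ms + mb) * ((T : ℝ) - (K : ℝ) + ms))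
        > 2 * (T : ℝ)) ∧
      (2 * (T : ℝ) > ∑ i ∈ Finset.Icc 1 (2 * T - (T + K)),
          1 / ((T : ℝ) + (K : ℝ) + ms + mb + (i : ℝ))) ∧
      (2 * (T : ℝ) > ∑ i ∈ Finset.Icc 1 (2 * T - (T - K)),
          1 / ((T : ℝ) - (K : ℝ) + ms + mb + (i : ℝ))) :=
  final_estimate_general T
end

section
/- For a fleet of n airplanes with tank volumes v_i ≥ 0 and consumption rates c_i > 0, and any dropout sequence σ (a bijection {1,…,n} → A), the quantity Σ_{i=1}^n v_{σ(i)} / (Σ_{j=i}^n c_{σ(j)}) equals Σ_{i∈A} w_i·m_i/M_i for the Block-Stacking instance defined by m_i = c_i, w_i = v_i/c_i, where M_i = Σ_{j: π(j) ≤ π(i)} m_j and π is the reverse of σ^{-1}. Hence the maxima of the two problems over all orderings are equal. -/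
open Finset

/-!
Both objectives are the same sum written in two coordinates. Dropping plane `σ i` at step `i`
leaves the planes `σ i, …, σ (n-1)` in the air; in the stack `π = rev ∘ σ⁻¹` these are exactly the
blocks at height at most `π (σ i)`. So the denominators agree term by term, and the numerators agree
because `(v/c) · c = v`. The stacking orders are in bijection with the dropout sequences, so the
suprema agree as well.
-/

variable {ι : Type*} [Fintype ι] {n : ℕ}

noncomputable def fleetRange (v c : ι → ℝ) (σ : Fin n ≃ ι) : ℝ :=
  ∑ i, v (σ i) / ∑ j ∈ Ici i, c (σ j)

noncomputable def overhang {α : Type*} [LinearOrder α] (w m : ι → ℝ) (π : ι → α) : ℝ :=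
  ∑ i, w i * m i / ∑ j ∈ univ.filter (fun j => π j ≤ π i), m j

theorem sum_Ici_comp_equiv_eq_sum_filter {M : Type*} [AddCommMonoid M] (f : ι → M)
    (σ : Fin n ≃ ι) (i : Fin n) :
    ∑ j ∈ Ici i, f (σ j) = ∑ j ∈ univ.filter (fun j => (σ.symm j).rev ≤ i.rev), f j :=
  sum_equiv σ (fun j => by simp [Fin.rev_le_rev]) (fun _ _ => rfl)

theorem fleetRange_eq_overhang {v c : ι → ℝ} (hc : ∀ i, c i ≠ 0) (σ : Fin n ≃ ι) :
    fleetRange v c σ = overhang (fun i => v i / c i) c (fun i => (σ.symm i).rev) := by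
  refine Fintype.sum_equiv σ _ _ fun i => ?_
  simp only [sum_Ici_comp_equiv_eq_sum_filter, div_mul_cancel₀ _ (hc (σ i)),
    Equiv.symm_apply_apply]

theorem iSup_fleetRange_eq_iSup_overhang {v c : ι → ℝ} (hc : ∀ i, c i ≠ 0) :
    ⨆ σ : Fin n ≃ ι, fleetRange v c σ
      = ⨆ π : ι ≃ Fin n, overhang (fun i => v i / c i) c π := by
  have stacking_surjective : Function.Surjective
      fun σ : Fin n ≃ ι => σ.symm.trans (Fin.revPerm : Equiv.Perm (Fin n)) :=
    fun π => ⟨(π.trans Fin.revPerm).symm, by ext; simp⟩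
  simp_rw [fleetRange_eq_overhang hc]
  exact stacking_surjective.iSup_comp (fun π : ι ≃ Fin n => overhang _ c π)

theorem airplane_refueling_eq_block_stacking_general (n : ℕ)
    (v c : Fin n → ℝ) (hc : ∀ i, 0 < c i) :
    (∀ σ : Equiv.Perm (Fin n),
      ∑ i, v (σ i) / (∑ j ∈ Finset.Ici i, c (σ j))
        = ∑ i, (v i / c i) * c i
            / (∑ j ∈ Finset.univ.filter (fun j => (σ.symm j).rev ≤ (σ.symm i).rev), c j)) ∧
    (⨆ σ : Equiv.Perm (Fin n), ∑ i, v (σ i) / (∑ j ∈ Finset.Ici i, c (σ j)))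
      = ⨆ π : Equiv.Perm (Fin n),
          ∑ i, (v i / c i) * c i
            / (∑ j ∈ Finset.univ.filter (fun j => π j ≤ π i), c j) :=
  have hc' : ∀ i, c i ≠ 0 := fun i => (hc i).ne'
  ⟨fleetRange_eq_overhang hc', iSup_fleetRange_eq_iSup_overhang hc'⟩

/-- Airplane Refueling is equivalent to Block Stacking without
counterbalancing: under `m_i = c_i`, `w_i = v_i/c_i`, the fleet range of any
dropout sequence `σ` equals the overhang of the corresponding stacking order
(the reverse of `σ⁻¹`), and hence the optima coincide. -/
theorem airplane_refueling_eq_block_stacking (n : ℕ) (hn : 0 < n)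
    (v c : Fin n → ℝ) (hv : ∀ i, 0 ≤ v i) (hc : ∀ i, 0 < c i) :
    (∀ σ : Equiv.Perm (Fin n),
      ∑ i, v (σ i) / (∑ j ∈ Finset.Ici i, c (σ j))
        = ∑ i, (v i / c i) * c i
            / (∑ j ∈ Finset.univ.filter (fun j => (σ.symm j).rev ≤ (σ.symm i).rev), c j)) ∧
    (⨆ σ : Equiv.Perm (Fin n), ∑ i, v (σ i) / (∑ j ∈ Finset.Ici i, c (σ j)))
      = ⨆ π : Equiv.Perm (Fin n),
          ∑ i, (v i / c i) * c i
            / (∑ j ∈ Finset.univ.filter (fun j => π j ≤ π i), c j) :=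
  airplane_refueling_eq_block_stacking_general n v c hc
end
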